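/- If l and m are natural numbers with l not ⊥ m (their binary expansions overlap), then l # m = (l-1) # m = l # (m-1). -/

import Mathlib

/-- `l ⊥ m`: the binary expansions of `l` and `m` are disjoint. -/
def Perp (l m : ℕ) : Prop := ∀ i : ℕ, ¬(l.testBit i ∧ m.testBit i)

/-- The smallest `s` such that the binary digits of `l` and `m` are disjoint in
all positions `≥ s`. -/
noncomputable def hashS (l m : ℕ) : ℕ :=
  sInf {s : ℕ | ∀ r : ℕ, s ≤ r → ¬(l.testBit r ∧ m.testBit r)}

/-- `l # m = (Σ_{i≥s}[l]_i 2^i) + (Σ_{i≥s}[m]_i 2^i) + 2^s - 1`, where `s = hashS l m`;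
the truncation `Σ_{i≥s}[n]_i 2^i` equals `2^s * (n / 2^s)`. -/
noncomputable def hash (l m : ℕ) : ℕ :=
  2 ^ hashS l m * (l / 2 ^ hashS l m) + 2 ^ hashS l m * (m / 2 ^ hashS l m)
    + (2 ^ hashS l m - 1)

/-! ### Auxiliary lemmas -/

lemma tb_iff (n i : ℕ) : n.testBit i ↔ n / 2 ^ i % 2 = 1 := by
  rw [Nat.testBit_eq_decide_div_mod_eq]; simp

lemma div_mod_of_eq {T q v : ℕ} (hT : 0 < T) (hv : v < T) (n : ℕ) (hn : n = T * q + v) :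
    n / T = q ∧ n % T = v := by
  constructor
  · rw [hn, Nat.mul_add_div hT, Nat.div_eq_of_lt hv]
    omega
  · rw [hn, Nat.mul_add_mod, Nat.mod_eq_of_lt hv]

lemma decomp (n j : ℕ) : n % 2 ^ (j + 1) = 2 ^ j * (n / 2 ^ j % 2) + n % 2 ^ j := by
  rw [pow_succ, Nat.mod_mul]; ring

lemma high (n s r : ℕ) (h : s ≤ r) : n.testBit r = (n / 2 ^ s).testBit (r - s) := by
  rw [Nat.testBit_eq_decide_div_mod_eq, Nat.testBit_eq_decide_div_mod_eq, Nat.div_div_eq_div_mul, ← pow_add]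
  have : s + (r - s) = r := by omega
  rw [this]

lemma high_eq {a b s : ℕ} (hq : a / 2 ^ s = b / 2 ^ s) {r : ℕ} (h : s ≤ r) :
    a.testBit r = b.testBit r := by
  rw [high a s r h, high b s r h, hq]

lemma low_eq (n t r : ℕ) (h : r < t) : n.testBit r = (n % 2 ^ t).testBit r := by
  rw [Nat.testBit_mod_two_pow]; simp [h]

lemma mod_pred_pow (a b : ℕ) (h : a ≤ b) : (2 ^ b - 1) % 2 ^ a = 2 ^ a - 1 := by
  have h1 : (2 : ℕ) ^ b = 2 ^ a * 2 ^ (b - a) := by rw [← pow_add]; congr 1; omega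
  have h2 : 0 < (2 : ℕ) ^ a := pow_pos two_pos a
  have h3 : 0 < (2 : ℕ) ^ (b - a) := pow_pos two_pos _
  have h4 : 2 ^ a * (2 ^ (b - a) - 1) = 2 ^ a * 2 ^ (b - a) - 2 ^ a := Nat.mul_pred _ _
  have h5 : 2 ^ a * (2 ^ (b - a) - 1) = 2 ^ b - 2 ^ a := by rw [h4, ← h1]
  have h6 : (2 : ℕ) ^ a ≤ 2 ^ b := Nat.pow_le_pow_right two_pos h
  have hn : 2 ^ b - 1 = 2 ^ a * (2 ^ (b - a) - 1) + (2 ^ a - 1) := by omega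
  exact (div_mod_of_eq h2 (by omega) (2 ^ b - 1) hn).2

lemma hashS_nonempty (l m : ℕ) :
    Set.Nonempty {s : ℕ | ∀ r : ℕ, s ≤ r → ¬(l.testBit r ∧ m.testBit r)} := by
  refine ⟨l, fun r hr hc => ?_⟩
  have hlt : l < 2 ^ r := lt_of_lt_of_le (Nat.lt_two_pow_self (n := l)) (Nat.pow_le_pow_right two_pos hr)
  simp [Nat.testBit_eq_false_of_lt hlt] at hc

lemma hashS_spec (l m : ℕ) : ∀ r, hashS l m ≤ r → ¬(l.testBit r ∧ m.testBit r) :=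
  Nat.sInf_mem (hashS_nonempty l m)

lemma hashS_eq (l m s : ℕ) (h1 : ∀ r, s ≤ r → ¬(l.testBit r ∧ m.testBit r))
    (h2 : s = 0 ∨ (l.testBit (s - 1) ∧ m.testBit (s - 1))) : hashS l m = s := by
  have hle : hashS l m ≤ s := Nat.sInf_le h1
  rcases h2 with rfl | hbit
  · omega
  · by_contra hne
    exact hashS_spec l m (s - 1) (by omega) hbit

lemma hashS_bit (l m : ℕ) (h : ¬ Perp l m) :
    hashS l m ≠ 0 ∧ l.testBit (hashS l m - 1) ∧ m.testBit (hashS l m - 1) := by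
  have h0 : hashS l m ≠ 0 := fun h0 => h fun i => hashS_spec l m i (by omega)
  refine ⟨h0, ?_⟩
  by_contra hc
  have hmem : (hashS l m - 1) ∈ {s : ℕ | ∀ r : ℕ, s ≤ r → ¬(l.testBit r ∧ m.testBit r)} := by
    intro r hr hc2
    by_cases hrr : r = hashS l m - 1
    · exact hc (hrr ▸ hc2)
    · exact hashS_spec l m r (by omega) hc2
  have hle : hashS l m ≤ hashS l m - 1 := Nat.sInf_le hmem
  omega

lemma key (l m : ℕ) (h : ¬ Perp l m) : hash l m = hash (l - 1) m := by
  obtain ⟨h0, hbl, hbm⟩ := hashS_bit l m h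
  set j := hashS l m - 1 with hjdef
  have hs : hashS l m = j + 1 := by omega
  have hspec := hashS_spec l m
  have hlj : l / 2 ^ j % 2 = 1 := (tb_iff _ _).1 hbl
  have hmj : m / 2 ^ j % 2 = 1 := (tb_iff _ _).1 hbm
  have hlms : l % 2 ^ (j + 1) = 2 ^ j + l % 2 ^ j := by rw [decomp, hlj]; ring
  have hmms : m % 2 ^ (j + 1) = 2 ^ j + m % 2 ^ j := by rw [decomp, hmj]; ring
  have hj1 : 0 < (2 : ℕ) ^ j := pow_pos two_pos j
  have hs1 : (2 : ℕ) ^ (j + 1) = 2 * 2 ^ j := by rw [pow_succ]; ring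
  have hs0 : 0 < (2 : ℕ) ^ (j + 1) := pow_pos two_pos _
  have hdm_l := Nat.div_add_mod l (2 ^ (j + 1))
  have hdm_m := Nat.div_add_mod m (2 ^ (j + 1))
  have hmltl : l % 2 ^ j < 2 ^ j := Nat.mod_lt _ hj1
  have hmltm : m % 2 ^ j < 2 ^ j := Nat.mod_lt _ hj1
  by_cases hA : l % 2 ^ j = 0
  · -- low part of l is zero
    have hlm2 : l % 2 ^ (j + 1) = 2 ^ j := by omega
    obtain ⟨hdivB, hmodB⟩ := div_mod_of_eq (q := l / 2 ^ (j + 1)) (v := 2 ^ j - 1) hs0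
      (by omega) (l - 1) (by omega)
    have hlow : ∀ r, r < j + 1 → (l - 1).testBit r = decide (r < j) := by
      intro r hr
      rw [low_eq (l - 1) (j + 1) r hr, hmodB, Nat.testBit_two_pow_sub_one]
    by_cases hBm : m % 2 ^ j = 0
    · -- l-1 and m are disjoint
      have hSnew : hashS (l - 1) m = 0 := by
        refine hashS_eq _ _ 0 (fun r _ hc => ?_) (Or.inl rfl)
        rcases lt_or_ge r (j + 1) with hr | hr
        · by_cases hrj : r = j
          · subst hrj
            have := hlow j (by omega)
            simp [this] at hc
          · have : m.testBit r = (m % 2 ^ j).testBit r := low_eq m j r (by omega)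
            rw [hBm] at this
            simp [Nat.zero_testBit] at this
            exact absurd hc.2 (by simp [this])
        · rw [high_eq hdivB hr] at hc
          exact hspec r (by omega) hc
      have hmm2 : m % 2 ^ (j + 1) = 2 ^ j := by omega
      simp only [_root_.hash, hSnew, hs, pow_zero, one_mul, Nat.div_one]
      omega
    · -- m has a low bit below j
      set u := m % 2 ^ j with hudef
      set j' := Nat.log 2 u with hj'def
      have hu1 : 2 ^ j' ≤ u := Nat.pow_log_le_self 2 hBm
      have hu2 : u < 2 ^ (j' + 1) := Nat.lt_pow_succ_log_self one_lt_two u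
      have hj'j : j' < j := by
        by_contra hcon
        have : (2 : ℕ) ^ j ≤ 2 ^ j' := Nat.pow_le_pow_right two_pos (by omega)
        omega
      have hs1' : (2 : ℕ) ^ (j' + 1) = 2 * 2 ^ j' := by rw [pow_succ]; ring
      have hj'1 : 0 < (2 : ℕ) ^ j' := pow_pos two_pos j'
      have hmu : m % 2 ^ (j' + 1) = u := by
        have hd : m % 2 ^ (j + 1) % 2 ^ (j' + 1) = m % 2 ^ (j' + 1) :=
          Nat.mod_mod_of_dvd m (pow_dvd_pow 2 (by omega))
        have hd2 : (2 ^ j + u) % 2 ^ (j' + 1) = u % 2 ^ (j' + 1) := by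
          have hp : (2 : ℕ) ^ j = 2 ^ (j' + 1) * 2 ^ (j - (j' + 1)) := by
            rw [← pow_add]; congr 1; omega
          rw [hp, Nat.mul_add_mod]
        rw [← hd, hmms, hd2, Nat.mod_eq_of_lt hu2]
      have hbm' : m.testBit j' := by
        rw [low_eq m (j' + 1) j' (by omega), hmu, tb_iff]
        have : u / 2 ^ j' = 1 :=
          (div_mod_of_eq (q := 1) (v := u - 2 ^ j') hj'1 (by omega) u (by omega)).1
        rw [this]
      have hbl' : (l - 1).testBit j' := by
        rw [hlow j' (by omega)]
        simp [hj'j]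
      have hSnew : hashS (l - 1) m = j' + 1 := by
        refine hashS_eq _ _ (j' + 1) (fun r hr hc => ?_) (Or.inr (by simpa using ⟨hbl', hbm'⟩))
        rcases lt_or_ge r (j + 1) with hrj | hrj
        · by_cases hrr : r = j
          · subst hrr
            have := hlow j (by omega)
            simp [this] at hc
          · -- j' + 1 ≤ r < j : m has no bit there
            have hm0 : m.testBit r = (m % 2 ^ j).testBit r := low_eq m j r (by omega)
            have : (m % 2 ^ j).testBit r = false :=
              Nat.testBit_eq_false_of_lt (lt_of_lt_of_le hu2 (Nat.pow_le_pow_right two_pos hr))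
            rw [hm0, this] at hc
            simp at hc
        · rw [high_eq hdivB hrj] at hc
          exact hspec r (by omega) hc
      have hlm' : (l - 1) % 2 ^ (j' + 1) = 2 ^ (j' + 1) - 1 := by
        have hd : (l - 1) % 2 ^ (j + 1) % 2 ^ (j' + 1) = (l - 1) % 2 ^ (j' + 1) :=
          Nat.mod_mod_of_dvd _ (pow_dvd_pow 2 (by omega))
        rw [← hd, hmodB, mod_pred_pow (j' + 1) j (by omega)]
      have hdm_l' := Nat.div_add_mod (l - 1) (2 ^ (j' + 1))
      have hdm_m' := Nat.div_add_mod m (2 ^ (j' + 1))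
      have hple : (2 : ℕ) ^ (j' + 1) ≤ 2 ^ j := Nat.pow_le_pow_right two_pos (by omega)
      simp only [_root_.hash, hSnew, hs]
      omega
  · -- low part of l is nonzero: subtracting one does not change bits ≥ j
    obtain ⟨hdivA, hmodA⟩ := div_mod_of_eq (q := l / 2 ^ (j + 1)) (v := l % 2 ^ (j + 1) - 1) hs0
      (by omega) (l - 1) (by omega)
    have hbl1 : (l - 1).testBit j := by
      rw [tb_iff]
      have hbit : (l - 1) / 2 ^ j % 2 = (l - 1) % 2 ^ (j + 1) / 2 ^ j := by
        have := decomp (l - 1) j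
        have h2 : (l - 1) % 2 ^ j < 2 ^ j := Nat.mod_lt _ hj1
        have h3 := (div_mod_of_eq (q := (l - 1) / 2 ^ j % 2) (v := (l - 1) % 2 ^ j) hj1 h2
          ((l - 1) % 2 ^ (j + 1)) this).1
        omega
      rw [hbit, hmodA]
      have : (l % 2 ^ (j + 1) - 1) / 2 ^ j = 1 :=
        (div_mod_of_eq (q := 1) (v := l % 2 ^ j - 1) hj1 (by omega) _ (by omega)).1
      rw [this]
    have hSnew : hashS (l - 1) m = j + 1 := by
      refine hashS_eq _ _ (j + 1) (fun r hr hc => ?_) (Or.inr (by simpa using ⟨hbl1, hbm⟩))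
      rw [high_eq hdivA hr] at hc
      exact hspec r (by omega) hc
    simp only [_root_.hash, hSnew, hs, hdivA]

lemma hash_comm (l m : ℕ) : hash l m = hash m l := by
  have hS : hashS l m = hashS m l := by
    unfold hashS
    congr 1
    ext s
    exact ⟨fun hs r hr hc => hs r hr ⟨hc.2, hc.1⟩, fun hs r hr hc => hs r hr ⟨hc.2, hc.1⟩⟩
  unfold _root_.hash
  rw [hS]
  ring

theorem stmt_17 (l m : ℕ) (h : ¬ Perp l m) :
    hash l m = hash (l - 1) m ∧ hash l m = hash l (m - 1) := by
  refine ⟨key l m h, ?_⟩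
  have h' : ¬ Perp m l := fun hp => h fun i hc => hp i ⟨hc.2, hc.1⟩
  calc hash l m = hash m l := hash_comm l m
    _ = hash (m - 1) l := key m l h'
    _ = hash l (m - 1) := hash_comm _ _
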